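/- (Unconditional energy dissipation for scheme S2.) Let N ≥ 2, Δx > 0, Δt > 0, let H : ℝ → ℝ be convex and differentiable, V ∈ ℝᴺ, and let K ∈ ℝ^{N×N} be given by K_{ik} = w(i−k) for an even function w : ℤ → ℝ. Suppose ρⁿ, ρⁿ⁺¹, ρ** ∈ ℝᴺ satisfy the S2 scheme: ξ_i = H'(ρⁿ⁺¹_i) + V_i + Δx·∑_{k=1}^{N} K_{ik}ρ**_k; u_{i+1/2} = −(ξ_{i+1} − ξ_i)/Δx for i = 1,…,N−1; F_{i+1/2} = ρⁿ⁺¹_i·u_{i+1/2}⁺ + ρⁿ⁺¹_{i+1}·u_{i+1/2}⁻; F_{1/2} = F_{N+1/2} = 0; and ρⁿ⁺¹_i = ρⁿ_i − (Δt/Δx)(F_{i+1/2} − F_{i−1/2}) for all i. Assume ρⁿ_i ≥ 0 for all i. If one of the following holds: (i) ρ** = (ρⁿ + ρⁿ⁺¹)/2; (ii) ρ** = ρⁿ and K is negative definite; (iii) ρ** = ρⁿ⁺¹ and K is positive definite; then E_Δ(ρⁿ⁺¹) ≤ E_Δ(ρⁿ), with no CFL restriction on Δt. -/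

import Mathlib

/-!
Implicit upwinding keeps `ρⁿ⁺¹` nonnegative for every `Δt`: testing the update against the
indicator of `{ρⁿ⁺¹ < 0}` and summing by parts shows that the negative part of `ρⁿ⁺¹` has
nonnegative total mass. Summing by parts once more gives
`∑ (ρⁿ⁺¹ - ρⁿ) ξ = -Δt ∑ u F ≤ 0`, since `u F = ρⁿ⁺¹_i (u⁺)² + ρⁿ⁺¹_{i+1} (u⁻)² ≥ 0`.
On the other hand `E_Δ(ρⁿ⁺¹) - E_Δ(ρⁿ) ≤ Δx ∑ (ρⁿ⁺¹ - ρⁿ) ξ`: for the entropy this is the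
tangent-line inequality of `H` at `ρⁿ⁺¹`, and for the interaction energy `Q` with bilinear form
`B` it holds because `K` is symmetric, so `(Q b - Q a) / 2 = B (b - a) ((a + b) / 2)`;
the midpoint choice of `ρ**` matches this exactly, the other two differ from it by
`∓ Q (b - a) / 2`, whose sign is given by the definiteness of `K`.
-/

/-- Positive part `z⁺ = max(z,0)`. -/
noncomputable def pospart (z : ℝ) : ℝ := max z 0

/-- Negative part `z⁻ = min(z,0)`. -/
noncomputable def negpart (z : ℝ) : ℝ := min z 0

/-- The discrete free energy
`E_Δ(ρ) = Δx·(∑ H(ρ_i) + ∑ V_i ρ_i + (Δx/2)·∑_{i,k} K_{ik} ρ_i ρ_k)`. -/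
noncomputable def Edisc (N : ℕ) (dx : ℝ) (H : ℝ → ℝ) (V : ℕ → ℝ) (K : ℕ → ℕ → ℝ)
    (ρ : ℕ → ℝ) : ℝ :=
  dx * ((∑ i ∈ Finset.Icc 1 N, H (ρ i)) + (∑ i ∈ Finset.Icc 1 N, V i * ρ i)
    + dx / 2 * ∑ i ∈ Finset.Icc 1 N, ∑ k ∈ Finset.Icc 1 N, K i k * ρ i * ρ k)

/-- The kernel `K` is negative definite: `∑_{i,k} K_{ik}(a_i−b_i)(a_k−b_k) ≤ 0`
for all vectors `a, b` with nonnegative entries. -/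
def NegDefKer (N : ℕ) (K : ℕ → ℕ → ℝ) : Prop :=
  ∀ a b : ℕ → ℝ, (∀ i, 1 ≤ i → i ≤ N → 0 ≤ a i) → (∀ i, 1 ≤ i → i ≤ N → 0 ≤ b i) →
    ∑ i ∈ Finset.Icc 1 N, ∑ k ∈ Finset.Icc 1 N, K i k * (a i - b i) * (a k - b k) ≤ 0

/-- The kernel `K` is positive definite: `∑_{i,k} K_{ik}(a_i−b_i)(a_k−b_k) ≥ 0`
for all vectors `a, b` with nonnegative entries. -/
def PosDefKer (N : ℕ) (K : ℕ → ℕ → ℝ) : Prop :=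
  ∀ a b : ℕ → ℝ, (∀ i, 1 ≤ i → i ≤ N → 0 ≤ a i) → (∀ i, 1 ≤ i → i ≤ N → 0 ≤ b i) →
    0 ≤ ∑ i ∈ Finset.Icc 1 N, ∑ k ∈ Finset.Icc 1 N, K i k * (a i - b i) * (a k - b k)

open Finset

lemma ConvexOn.sub_le_deriv_mul_sub {S : Set ℝ} {f : ℝ → ℝ} (hf : ConvexOn ℝ S f) {x y : ℝ}
    (hx : x ∈ S) (hy : y ∈ S) (hfx : DifferentiableAt ℝ f x) :
    f x - f y ≤ deriv f x * (x - y) := by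
  rcases lt_trichotomy x y with hxy | rfl | hxy
  · have h := hf.deriv_le_slope hx hy hxy hfx
    rw [slope_def_field, le_div_iff₀ (by linarith)] at h
    linarith
  · simp
  · have h := hf.slope_le_deriv hy hx hxy hfx
    rw [slope_def_field, div_le_iff₀ (by linarith)] at h
    linarith

lemma sum_mul_sub_pred_eq {N : ℕ} (g F : ℕ → ℝ) (hF0 : F 0 = 0) (hFN : F N = 0) :
    ∑ i ∈ Icc 1 N, g i * (F i - F (i - 1)) = ∑ i ∈ Icc 1 (N - 1), (g i - g (i + 1)) * F i := by
  have hdiag : ∑ i ∈ Icc 1 N, g i * F i = ∑ i ∈ Icc 1 (N - 1), g i * F i := by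
    refine (sum_subset (Icc_subset_Icc_right (Nat.sub_le N 1)) fun i hi hi' => ?_).symm
    simp only [mem_Icc] at hi hi'
    rw [show i = N by omega, hFN, mul_zero]
  have hshift : ∑ i ∈ Icc 1 N, g i * F (i - 1) = ∑ i ∈ Icc 1 (N - 1), g (i + 1) * F i := by
    rw [← Ico_add_one_right_eq_Icc, ← zero_add 1, ← sum_Ico_add', zero_add]
    simp only [Nat.add_sub_cancel]
    refine (sum_subset (fun i hi => ?_) fun i hi hi' => ?_).symm
    · simp only [mem_Icc, mem_Ico] at hi ⊢; omega
    · simp only [mem_Icc, mem_Ico] at hi hi'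
      rw [show i = 0 by omega, hF0, mul_zero]
  simp only [mul_sub, sub_mul, sum_sub_distrib, hdiag, hshift]

def kernelForm {ι : Type*} (s : Finset ι) (K : ι → ι → ℝ) : LinearMap.BilinForm ℝ (ι → ℝ) :=
  LinearMap.mk₂ ℝ (fun a b => ∑ i ∈ s, ∑ k ∈ s, K i k * a i * b k)
    (fun a a' b => by simp only [Pi.add_apply, mul_add, add_mul, sum_add_distrib])
    (fun c a b => by
      simp only [Pi.smul_apply, smul_eq_mul, mul_sum]
      exact sum_congr rfl fun _ _ => sum_congr rfl fun _ _ => by ring)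
    (fun a b b' => by simp only [Pi.add_apply, mul_add, sum_add_distrib])
    (fun c a b => by
      simp only [Pi.smul_apply, smul_eq_mul, mul_sum]
      exact sum_congr rfl fun _ _ => sum_congr rfl fun _ _ => by ring)

section KernelForm

variable {ι : Type*} (s : Finset ι) (K : ι → ι → ℝ)

lemma kernelForm_apply (a b : ι → ℝ) :
    kernelForm s K a b = ∑ i ∈ s, ∑ k ∈ s, K i k * a i * b k := rfl

variable {s K}

lemma kernelForm_comm (hK : ∀ i k, K i k = K k i) (a b : ι → ℝ) :
    kernelForm s K a b = kernelForm s K b a := by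
  rw [kernelForm_apply, kernelForm_apply, sum_comm]
  exact sum_congr rfl fun _ _ => sum_congr rfl fun _ _ => by rw [hK]; ring

lemma kernelForm_congr_right {a b c : ι → ℝ} (h : ∀ i ∈ s, b i = c i) :
    kernelForm s K a b = kernelForm s K a c :=
  sum_congr rfl fun _ _ => sum_congr rfl fun k hk => by rw [h k hk]

lemma kernelForm_sub_kernelForm (hK : ∀ i k, K i k = K k i) (a b : ι → ℝ) :
    kernelForm s K b b - kernelForm s K a a = kernelForm s K (b - a) (b + a) := by
  simp only [map_sub, map_add, LinearMap.sub_apply, kernelForm_comm hK a b]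
  ring

lemma half_kernelForm_sub_eq_of_midpoint (hK : ∀ i k, K i k = K k i) {a b c : ι → ℝ}
    (hc : ∀ i ∈ s, c i = (a i + b i) / 2) :
    (kernelForm s K b b - kernelForm s K a a) / 2 = kernelForm s K (b - a) c := by
  have hc' : ∀ i ∈ s, c i = ((2 : ℝ)⁻¹ • (b + a)) i := fun i hi => by
    simp only [hc i hi, Pi.smul_apply, Pi.add_apply, smul_eq_mul]; ring
  rw [kernelForm_sub_kernelForm hK, kernelForm_congr_right hc', map_smul, smul_eq_mul]
  ring

lemma half_kernelForm_sub_le_of_left (hK : ∀ i k, K i k = K k i) {a b c : ι → ℝ}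
    (hc : ∀ i ∈ s, c i = a i) (hneg : kernelForm s K (b - a) (b - a) ≤ 0) :
    (kernelForm s K b b - kernelForm s K a a) / 2 ≤ kernelForm s K (b - a) c := by
  rw [kernelForm_sub_kernelForm hK, kernelForm_congr_right hc,
    show b + a = (b - a) + a + a by abel, map_add, map_add]
  linarith

lemma half_kernelForm_sub_le_of_right (hK : ∀ i k, K i k = K k i) {a b c : ι → ℝ}
    (hc : ∀ i ∈ s, c i = b i) (hpos : 0 ≤ kernelForm s K (b - a) (b - a)) :
    (kernelForm s K b b - kernelForm s K a a) / 2 ≤ kernelForm s K (b - a) c := by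
  rw [kernelForm_sub_kernelForm hK, kernelForm_congr_right hc,
    show b + a = b + b - (b - a) by abel, map_sub, map_add]
  linarith

end KernelForm

lemma Edisc_sub_le {N : ℕ} {dx : ℝ} (hdx : 0 ≤ dx) {H : ℝ → ℝ} (hH : ConvexOn ℝ Set.univ H)
    (hHd : Differentiable ℝ H) (V : ℕ → ℝ) {K : ℕ → ℕ → ℝ} {a b c : ℕ → ℝ}
    (hquad : (kernelForm (Icc 1 N) K b b - kernelForm (Icc 1 N) K a a) / 2
      ≤ kernelForm (Icc 1 N) K (b - a) c) :
    Edisc N dx H V K b - Edisc N dx H V K a ≤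
      dx * ∑ i ∈ Icc 1 N, (b i - a i) * (deriv H (b i) + V i + dx * ∑ k ∈ Icc 1 N, K i k * c k) := by
  have hconv : ∑ i ∈ Icc 1 N, H (b i) - ∑ i ∈ Icc 1 N, H (a i)
      ≤ ∑ i ∈ Icc 1 N, (b i - a i) * deriv H (b i) := by
    rw [← sum_sub_distrib]
    exact sum_le_sum fun i _ => by
      linarith [hH.sub_le_deriv_mul_sub (Set.mem_univ (b i)) (Set.mem_univ (a i)) (hHd (b i))]
  have hsplit :
      ∑ i ∈ Icc 1 N, (b i - a i) * (deriv H (b i) + V i + dx * ∑ k ∈ Icc 1 N, K i k * c k)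
      = ∑ i ∈ Icc 1 N, (b i - a i) * deriv H (b i) + ∑ i ∈ Icc 1 N, V i * (b i - a i)
        + dx * kernelForm (Icc 1 N) K (b - a) c := by
    have hform : kernelForm (Icc 1 N) K (b - a) c
        = ∑ i ∈ Icc 1 N, (b i - a i) * ∑ k ∈ Icc 1 N, K i k * c k := by
      simp only [kernelForm_apply, mul_sum, Pi.sub_apply]
      exact sum_congr rfl fun _ _ => sum_congr rfl fun _ _ => by ring
    rw [hform, mul_sum, ← sum_add_distrib, ← sum_add_distrib]
    exact sum_congr rfl fun i _ => by ring
  have hlin : ∑ i ∈ Icc 1 N, V i * b i - ∑ i ∈ Icc 1 N, V i * a i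
      = ∑ i ∈ Icc 1 N, V i * (b i - a i) := by
    simp only [mul_sub, sum_sub_distrib]
  have hquad' := mul_le_mul_of_nonneg_left hquad hdx
  rw [hsplit, Edisc, Edisc, ← kernelForm_apply, ← kernelForm_apply, ← mul_sub]
  refine mul_le_mul_of_nonneg_left ?_ hdx
  linarith

section UpwindScheme

variable {N : ℕ} {r : ℝ} {ρ ρ' u F : ℕ → ℝ}

lemma sum_sub_mul_of_update (hF0 : F 0 = 0) (hFN : F N = 0)
    (hupd : ∀ i, 1 ≤ i → i ≤ N → ρ' i = ρ i - r * (F i - F (i - 1))) (g : ℕ → ℝ) :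
    ∑ i ∈ Icc 1 N, (ρ' i - ρ i) * g i = -(r * ∑ i ∈ Icc 1 (N - 1), (g i - g (i + 1)) * F i) := by
  rw [← sum_mul_sub_pred_eq g F hF0 hFN, mul_sum, ← sum_neg_distrib]
  refine sum_congr rfl fun i hi => ?_
  rw [hupd i (mem_Icc.1 hi).1 (mem_Icc.1 hi).2]
  ring

lemma ite_neg_sub_mul_upwind_nonpos (x y v : ℝ) :
    ((if x < 0 then 1 else 0) - (if y < 0 then 1 else 0)) * (x * pospart v + y * negpart v)
      ≤ 0 := by
  have hp : 0 ≤ pospart v := le_max_right v 0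
  have hn : negpart v ≤ 0 := min_le_right v 0
  split_ifs with hx hy hy <;> nlinarith

lemma upwind_nonneg (hr : 0 ≤ r)
    (hF : ∀ i, 1 ≤ i → i ≤ N - 1 → F i = ρ' i * pospart (u i) + ρ' (i + 1) * negpart (u i))
    (hF0 : F 0 = 0) (hFN : F N = 0)
    (hupd : ∀ i, 1 ≤ i → i ≤ N → ρ' i = ρ i - r * (F i - F (i - 1)))
    (hρ : ∀ i, 1 ≤ i → i ≤ N → 0 ≤ ρ i) :
    ∀ i, 1 ≤ i → i ≤ N → 0 ≤ ρ' i := by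
  set g : ℕ → ℝ := fun i => if ρ' i < 0 then 1 else 0
  have hg : ∀ i, 0 ≤ g i := fun i => by simp only [g]; split_ifs <;> norm_num
  have hflux : ∑ i ∈ Icc 1 (N - 1), (g i - g (i + 1)) * F i ≤ 0 :=
    sum_nonpos fun i hi => by
      rw [hF i (mem_Icc.1 hi).1 (mem_Icc.1 hi).2]
      exact ite_neg_sub_mul_upwind_nonpos _ _ _
  have hgρ : 0 ≤ ∑ i ∈ Icc 1 N, ρ i * g i :=
    sum_nonneg fun i hi => mul_nonneg (hρ i (mem_Icc.1 hi).1 (mem_Icc.1 hi).2) (hg i)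
  have hgρ' : 0 ≤ ∑ i ∈ Icc 1 N, ρ' i * g i := by
    have hsplit : ∑ i ∈ Icc 1 N, ρ' i * g i
        = ∑ i ∈ Icc 1 N, ρ i * g i + ∑ i ∈ Icc 1 N, (ρ' i - ρ i) * g i := by
      rw [← sum_add_distrib]; exact sum_congr rfl fun _ _ => by ring
    rw [hsplit, sum_sub_mul_of_update hF0 hFN hupd g]
    linarith [mul_nonpos_of_nonneg_of_nonpos hr hflux]
  have hterm : ∀ i ∈ Icc 1 N, ρ' i * g i ≤ 0 := fun i _ => by
    simp only [g]; split_ifs with h <;> linarith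
  intro i hi1 hi2
  have hzero := (sum_eq_zero_iff_of_nonpos hterm).1 (le_antisymm (sum_nonpos hterm) hgρ')
    i (mem_Icc.2 ⟨hi1, hi2⟩)
  by_contra hneg
  simp only [g, if_pos (not_le.1 hneg), mul_one] at hzero
  exact hneg hzero.ge

lemma mul_upwind_nonneg {x y : ℝ} (hx : 0 ≤ x) (hy : 0 ≤ y) (v : ℝ) :
    0 ≤ v * (x * pospart v + y * negpart v) := by
  rcases le_total v 0 with hv | hv
  · rw [pospart, negpart, max_eq_right hv, min_eq_left hv]
    nlinarith [mul_nonneg hy (mul_self_nonneg v)]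
  · rw [pospart, negpart, max_eq_left hv, min_eq_right hv]
    nlinarith [mul_nonneg hx (mul_self_nonneg v)]

lemma upwind_sum_sub_mul_nonpos {dx : ℝ} (hdx : 0 < dx) (hr : 0 ≤ r) {ξ : ℕ → ℝ}
    (hu : ∀ i, 1 ≤ i → i ≤ N - 1 → u i = -(ξ (i + 1) - ξ i) / dx)
    (hF : ∀ i, 1 ≤ i → i ≤ N - 1 → F i = ρ' i * pospart (u i) + ρ' (i + 1) * negpart (u i))
    (hF0 : F 0 = 0) (hFN : F N = 0)
    (hupd : ∀ i, 1 ≤ i → i ≤ N → ρ' i = ρ i - r * (F i - F (i - 1)))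
    (hρ' : ∀ i, 1 ≤ i → i ≤ N → 0 ≤ ρ' i) :
    ∑ i ∈ Icc 1 N, (ρ' i - ρ i) * ξ i ≤ 0 := by
  rw [sum_sub_mul_of_update hF0 hFN hupd, neg_nonpos]
  refine mul_nonneg hr (sum_nonneg fun i hi => ?_)
  obtain ⟨hi1, hi2⟩ := mem_Icc.1 hi
  have hξ : ξ i - ξ (i + 1) = dx * u i := by rw [hu i hi1 hi2]; field_simp; ring
  rw [hξ, hF i hi1 hi2, mul_assoc]
  exact mul_nonneg hdx.le
    (mul_upwind_nonneg (hρ' i hi1 (by omega)) (hρ' (i + 1) (by omega) (by omega)) (u i))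

end UpwindScheme

theorem stmt_8_general (N : ℕ) (dx dt : ℝ) (hdx : 0 < dx) (hdt : 0 < dt)
    (H : ℝ → ℝ) (hHconv : ConvexOn ℝ Set.univ H) (hHdiff : Differentiable ℝ H)
    (V : ℕ → ℝ) (w : ℤ → ℝ) (hw : ∀ m : ℤ, w (-m) = w m)
    (K : ℕ → ℕ → ℝ) (hK : ∀ i k : ℕ, K i k = w ((i : ℤ) - (k : ℤ)))
    (ρn ρn1 ρss ξ u F : ℕ → ℝ)
    (hξ : ∀ i, 1 ≤ i → i ≤ N →
      ξ i = deriv H (ρn1 i) + V i + dx * ∑ k ∈ Finset.Icc 1 N, K i k * ρss k)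
    (hu : ∀ i, 1 ≤ i → i ≤ N - 1 → u i = -(ξ (i + 1) - ξ i) / dx)
    (hF : ∀ i, 1 ≤ i → i ≤ N - 1 →
      F i = ρn1 i * pospart (u i) + ρn1 (i + 1) * negpart (u i))
    (hF0 : F 0 = 0) (hFN : F N = 0)
    (hupd : ∀ i, 1 ≤ i → i ≤ N → ρn1 i = ρn i - dt / dx * (F i - F (i - 1)))
    (hpos : ∀ i, 1 ≤ i → i ≤ N → 0 ≤ ρn i)
    (hcase :
      (∀ i, 1 ≤ i → i ≤ N → ρss i = (ρn i + ρn1 i) / 2) ∨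
      ((∀ i, 1 ≤ i → i ≤ N → ρss i = ρn i) ∧ NegDefKer N K) ∨
      ((∀ i, 1 ≤ i → i ≤ N → ρss i = ρn1 i) ∧ PosDefKer N K)) :
    Edisc N dx H V K ρn1 ≤ Edisc N dx H V K ρn := by
  have hr : 0 ≤ dt / dx := by positivity
  have hsymm : ∀ i k, K i k = K k i := fun i k => by
    rw [hK, hK, ← hw, neg_sub]
  have hpos1 := upwind_nonneg hr hF hF0 hFN hupd hpos
  have hmem {P : ℕ → Prop} (h : ∀ i, 1 ≤ i → i ≤ N → P i) : ∀ i ∈ Icc 1 N, P i :=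
    fun i hi => h i (mem_Icc.1 hi).1 (mem_Icc.1 hi).2
  have hquad : (kernelForm (Icc 1 N) K ρn1 ρn1 - kernelForm (Icc 1 N) K ρn ρn) / 2
      ≤ kernelForm (Icc 1 N) K (ρn1 - ρn) ρss := by
    rcases hcase with hc | ⟨hc, hneg⟩ | ⟨hc, hposdef⟩
    · exact (half_kernelForm_sub_eq_of_midpoint hsymm (hmem hc)).le
    · exact half_kernelForm_sub_le_of_left hsymm (hmem hc) (hneg ρn1 ρn hpos1 hpos)
    · exact half_kernelForm_sub_le_of_right hsymm (hmem hc) (hposdef ρn1 ρn hpos1 hpos)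
  have henergy := Edisc_sub_le hdx.le hHconv hHdiff V hquad
  have hpairing : ∑ i ∈ Icc 1 N, (ρn1 i - ρn i) * ξ i ≤ 0 :=
    upwind_sum_sub_mul_nonpos hdx hr hu hF hF0 hFN hupd hpos1
  rw [sum_congr rfl fun i hi => by rw [hmem hξ i hi]] at hpairing
  linarith [mul_nonpos_of_nonneg_of_nonpos hdx.le hpairing]

/-- unconditional energy dissipation for the fully discrete implicit scheme
S2, for each of the three admissible choices of the convolution variable `ρ**`. -/
theorem stmt_8 (N : ℕ) (hN : 2 ≤ N) (dx dt : ℝ) (hdx : 0 < dx) (hdt : 0 < dt)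
    (H : ℝ → ℝ) (hHconv : ConvexOn ℝ Set.univ H) (hHdiff : Differentiable ℝ H)
    (V : ℕ → ℝ) (w : ℤ → ℝ) (hw : ∀ m : ℤ, w (-m) = w m)
    (K : ℕ → ℕ → ℝ) (hK : ∀ i k : ℕ, K i k = w ((i : ℤ) - (k : ℤ)))
    (ρn ρn1 ρss ξ u F : ℕ → ℝ)
    (hξ : ∀ i, 1 ≤ i → i ≤ N →
      ξ i = deriv H (ρn1 i) + V i + dx * ∑ k ∈ Finset.Icc 1 N, K i k * ρss k)
    (hu : ∀ i, 1 ≤ i → i ≤ N - 1 → u i = -(ξ (i + 1) - ξ i) / dx)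
    (hF : ∀ i, 1 ≤ i → i ≤ N - 1 →
      F i = ρn1 i * pospart (u i) + ρn1 (i + 1) * negpart (u i))
    (hF0 : F 0 = 0) (hFN : F N = 0)
    (hupd : ∀ i, 1 ≤ i → i ≤ N → ρn1 i = ρn i - dt / dx * (F i - F (i - 1)))
    (hpos : ∀ i, 1 ≤ i → i ≤ N → 0 ≤ ρn i)
    (hcase :
      (∀ i, 1 ≤ i → i ≤ N → ρss i = (ρn i + ρn1 i) / 2) ∨
      ((∀ i, 1 ≤ i → i ≤ N → ρss i = ρn i) ∧ NegDefKer N K) ∨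
      ((∀ i, 1 ≤ i → i ≤ N → ρss i = ρn1 i) ∧ PosDefKer N K)) :
    Edisc N dx H V K ρn1 ≤ Edisc N dx H V K ρn :=
  stmt_8_general N dx dt hdx hdt H hHconv hHdiff V w hw K hK ρn ρn1 ρss ξ u F hξ hu hF hF0 hFN hupd
    hpos hcase
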